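/- For integers D ≥ 0 and 1 ≤ M ≤ M', and any s ≥ D, the averaged staleness (1/M)∑_{j=0}^{M−1}(s − ⌊(Ms + j − D)/M⌋) is at least (1/M')∑_{j=0}^{M'−1}(s − ⌊(M's + j − D)/M'⌋); that is, the averaged level of staleness is non-increasing in the accumulation step M. -/

import Mathlib

/-! The staleness sum over one accumulation window does not depend on `s` or `M`: by the
integer form of Hermite's identity, `∑_{j<M} ⌊(n + j)/M⌋ = n`, it equals exactly `D`. The
averaged staleness is therefore `D / M`, which is non-increasing in `M` because `D ≥ 0`. -/

lemma Int.sum_range_add_ediv_succ (n : ℤ) {M : ℕ} (hM : 0 < M) :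
    ∑ j ∈ Finset.range M, (n + 1 + j) / M = ∑ j ∈ Finset.range M, (n + j) / M + 1 := by
  obtain ⟨m, rfl⟩ : ∃ m, M = m + 1 := ⟨M - 1, by omega⟩
  set f : ℕ → ℤ := fun j => (n + j) / ((m + 1 : ℕ) : ℤ)
  have hshift : ∀ j : ℕ, (n + 1 + j) / ((m + 1 : ℕ) : ℤ) = f (j + 1) := fun j => by
    simp only [f, Nat.cast_succ]
    ring_nf
  have hwrap : f (m + 1) = f 0 + 1 := by
    simp only [f, Nat.cast_zero, add_zero]
    simpa using Int.add_mul_ediv_right n 1 (by positivity : ((m + 1 : ℕ) : ℤ) ≠ 0)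
  simp only [hshift]
  rw [Finset.sum_range_succ (fun j => f (j + 1)), Finset.sum_range_succ' f, hwrap]
  ring

/-- Hermite's identity `∑_{j<M} ⌊x + j/M⌋ = ⌊M x⌋` at `x = n / M`, stated for integer division. -/
lemma Int.sum_range_add_ediv (n : ℤ) {M : ℕ} (hM : 0 < M) :
    ∑ j ∈ Finset.range M, (n + j) / M = n := by
  induction n using Int.induction_on with
  | zero =>
    refine Finset.sum_eq_zero fun j hj => ?_
    rw [zero_add]
    exact Int.ediv_eq_zero_of_lt (Nat.cast_nonneg j) (by exact_mod_cast Finset.mem_range.mp hj)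
  | succ n ih => rw [Int.sum_range_add_ediv_succ n hM, ih]
  | pred n ih =>
    have := Int.sum_range_add_ediv_succ (-n - 1) hM
    rw [sub_add_cancel, ih] at this
    linarith

lemma floor_mul_add_sub_div (D s : ℤ) (j : ℕ) {M : ℕ} (hM : 0 < M) :
    ⌊((M : ℚ) * s + j - D) / M⌋ = s + (-D + j) / M := by
  have hM' : (M : ℚ) ≠ 0 := by positivity
  have hsplit : ((M : ℚ) * s + j - D) / M = (((-D + j : ℤ) : ℚ) / (M : ℚ)) + s := by
    push_cast
    field_simp
    ring
  rw [hsplit, Int.floor_add_intCast, Rat.floor_intCast_div_natCast, add_comm]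

theorem sum_range_sub_floor_mul_add_sub_div (D s : ℤ) {M : ℕ} (hM : 0 < M) :
    ∑ j ∈ Finset.range M, ((s : ℚ) - ⌊((M : ℚ) * s + j - D) / M⌋) = D := by
  have hterm : ∀ j : ℕ, (s : ℚ) - ⌊((M : ℚ) * s + j - D) / M⌋ = -(((-D + j) / M : ℤ) : ℚ) := by
    intro j
    rw [floor_mul_add_sub_div D s j hM]
    push_cast
    ring
  simp only [hterm]
  rw [Finset.sum_neg_distrib, ← Int.cast_sum, Int.sum_range_add_ediv (-D) hM]
  push_cast
  ring

theorem stmt_4_general (D s : ℤ) (M M' : ℕ) (hD : 0 ≤ D) (hM : 1 ≤ M) (hMM' : M ≤ M') :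
    (1 / (M' : ℚ)) * ∑ j ∈ Finset.range M',
        ((s : ℚ) - ⌊((M' : ℚ) * s + j - D) / M'⌋) ≤
      (1 / (M : ℚ)) * ∑ j ∈ Finset.range M,
        ((s : ℚ) - ⌊((M : ℚ) * s + j - D) / M⌋) := by
  rw [sum_range_sub_floor_mul_add_sub_div D s (by omega), sum_range_sub_floor_mul_add_sub_div D s (by omega),
    one_div_mul_eq_div, one_div_mul_eq_div]
  exact div_le_div_of_nonneg_left (by exact_mod_cast hD) (by exact_mod_cast hM)
    (by exact_mod_cast hMM')

/-- For integers `D ≥ 0`, `1 ≤ M ≤ M'`, and any `s ≥ D`, the averaged level of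
staleness `(1/M)∑_{j=0}^{M−1}(s − ⌊(Ms + j − D)/M⌋)` is non-increasing in the
accumulation step `M`. -/
theorem stmt_4 (D s : ℤ) (M M' : ℕ) (hD : 0 ≤ D) (hM : 1 ≤ M) (hMM' : M ≤ M')
    (hs : D ≤ s) :
    (1 / (M' : ℚ)) * ∑ j ∈ Finset.range M',
        ((s : ℚ) - ⌊((M' : ℚ) * s + j - D) / M'⌋) ≤
      (1 / (M : ℚ)) * ∑ j ∈ Finset.range M,
        ((s : ℚ) - ⌊((M : ℚ) * s + j - D) / M⌋) :=
  stmt_4_general D s M M' hD hM hMM'
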